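/- Let G be a finite multidigraph that is k-out-regular for a positive integer k, with an edge e* = (w*, v*), and let σ(v) = Σ_{e⁻ = v} e. Then σ(Δ_G(w*) − v*) = Σ_{e ∈ E, e⁻ = w*, e ≠ e*} Δ_{𝓛G}(e) − k·e* in ℤE. -/
import Mathlib


open Finsupp

/-- The Laplacian of a multidigraph with edge tail map `t` and head map `h`,
as a linear endomorphism of the free abelian group on the vertices. -/
noncomputable def lap {V E : Type*} [Fintype E] [DecidableEq V] (t h : E → V) :
    (V →₀ ℤ) →ₗ[ℤ] (V →₀ ℤ) :=
  Finsupp.lift (V →₀ ℤ) ℤ V fun v =>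
    ∑ e : E, if t e = v then Finsupp.single (h e) (1 : ℤ) - Finsupp.single v 1 else 0

/-- The modified Laplacian `φ_{G,w}` : sends `v ↦ Δ_G v` for `v ≠ w`, and `w ↦ w`. -/
noncomputable def phiMod {V E : Type*} [Fintype E] [DecidableEq V] (t h : E → V) (w : V) :
    (V →₀ ℤ) →ₗ[ℤ] (V →₀ ℤ) :=
  Finsupp.lift (V →₀ ℤ) ℤ V fun v =>
    if v = w then Finsupp.single w 1 else lap t h (Finsupp.single v 1)

/-- Edges of the directed line graph: pairs `(e, f)` with `e⁺ = f⁻`. -/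
def LineEdge {V E : Type*} (t h : E → V) : Type _ := {p : E × E // h p.1 = t p.2}

instance {V E : Type*} [Fintype E] [DecidableEq V] (t h : E → V) :
    Fintype (LineEdge t h) := by
  unfold LineEdge; infer_instance

/-- in-degree of a vertex -/
def indeg {V E : Type*} [Fintype E] [DecidableEq V] (h : E → V) (v : V) : ℕ :=
  (Finset.univ.filter fun e => h e = v).card

/-- out-degree of a vertex -/
def outdeg {V E : Type*} [Fintype E] [DecidableEq V] (t : E → V) (v : V) : ℕ :=
  (Finset.univ.filter fun e => t e = v).card

/-- The modified target map `τ`: `e ↦ e⁺` for `e ≠ e*`, `e* ↦ 0`. -/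
noncomputable def tau {V E : Type*} [DecidableEq E] (h : E → V) (estar : E) :
    (E →₀ ℤ) →ₗ[ℤ] (V →₀ ℤ) :=
  Finsupp.lift (V →₀ ℤ) ℤ E fun e =>
    if e = estar then 0 else Finsupp.single (h e) 1

/-- The map `ρ`: `e ↦ Δ_G(w*) − v* − w* + e⁺` for `e ≠ e*`, `e* ↦ 0`,
where `w* = t e*` and `v* = h e*`. -/
noncomputable def rho {V E : Type*} [Fintype E] [DecidableEq V] [DecidableEq E]
    (t h : E → V) (estar : E) : (E →₀ ℤ) →ₗ[ℤ] (V →₀ ℤ) :=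
  Finsupp.lift (V →₀ ℤ) ℤ E fun e =>
    if e = estar then 0 else
      lap t h (Finsupp.single (t estar) 1) - Finsupp.single (h estar) 1
        - Finsupp.single (t estar) 1 + Finsupp.single (h e) 1

/-- The map `ρ₀`: `v ↦ Δ_G(w*) − v* − w* + v`. -/
noncomputable def rho0 {V E : Type*} [Fintype E] [DecidableEq V] (t h : E → V) (estar : E) :
    (V →₀ ℤ) →ₗ[ℤ] (V →₀ ℤ) :=
  Finsupp.lift (V →₀ ℤ) ℤ V fun v =>
    lap t h (Finsupp.single (t estar) 1) - Finsupp.single (h estar) 1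
      - Finsupp.single (t estar) 1 + Finsupp.single v 1

/-- The map `ψ`: `v ↦ Δ_G v` for `v ≠ w*`, and `w* ↦ Δ_G(w*) − v*`. -/
noncomputable def psi {V E : Type*} [Fintype E] [DecidableEq V] (t h : E → V) (estar : E) :
    (V →₀ ℤ) →ₗ[ℤ] (V →₀ ℤ) :=
  Finsupp.lift (V →₀ ℤ) ℤ V fun v =>
    if v = t estar then
      lap t h (Finsupp.single (t estar) 1) - Finsupp.single (h estar) 1
    else lap t h (Finsupp.single v 1)

/-- The map `σ`: `v ↦ Σ_{e⁻ = v} e`. -/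
noncomputable def sigmaMap {V E : Type*} [Fintype E] [DecidableEq V] (t : E → V) :
    (V →₀ ℤ) →ₗ[ℤ] (E →₀ ℤ) :=
  Finsupp.lift (E →₀ ℤ) ℤ V fun v =>
    ∑ e : E, if t e = v then Finsupp.single e (1 : ℤ) else 0

private noncomputable def SS {V E : Type*} [Fintype E] [DecidableEq V] (t : E → V) (v : V) : E →₀ ℤ :=
  ∑ f : E, if t f = v then Finsupp.single f (1:ℤ) else 0

section Aux
variable {V E : Type*} [Fintype E] [DecidableEq V] [DecidableEq E] (t h : E → V)

omit [DecidableEq E] in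
private lemma lap_single (v : V) :
    lap t h (Finsupp.single v 1) =
      ∑ e : E, if t e = v then Finsupp.single (h e) (1:ℤ) - Finsupp.single v 1 else 0 := by
  simp [lap]

omit [DecidableEq E] in
private lemma sigma_single (v : V) :
    sigmaMap t (Finsupp.single v 1) = SS t v := by
  simp [sigmaMap, SS]

omit [DecidableEq E] in
private lemma sum_ite_const {M : Type*} [AddCommMonoid M] (v : V) (c : M) :
    (∑ e : E, if t e = v then c else 0) = outdeg t v • c := by
  rw [← Finset.sum_filter, Finset.sum_const, outdeg]

private lemma lineLap_single (e : E) :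
    lap (fun p : LineEdge t h => p.1.1) (fun p : LineEdge t h => p.1.2)
        (Finsupp.single e 1) =
      ∑ f : E, if t f = h e then Finsupp.single f (1:ℤ) - Finsupp.single e 1 else 0 := by
  rw [lap_single (fun p : LineEdge t h => p.1.1) (fun p : LineEdge t h => p.1.2) e]
  rw [show (∑ p : LineEdge t h, if p.1.1 = e then
        Finsupp.single p.1.2 (1:ℤ) - Finsupp.single e 1 else 0) =
      ∑ p : {p : E × E // h p.1 = t p.2}, if p.1.1 = e then
        Finsupp.single p.1.2 (1:ℤ) - Finsupp.single e 1 else 0 from rfl]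
  rw [← Finset.sum_subtype (Finset.univ.filter fun p : E × E => h p.1 = t p.2)
      (fun x => by simp)
      (fun p : E × E => if p.1 = e then Finsupp.single p.2 (1:ℤ) - Finsupp.single e 1 else 0)]
  rw [Finset.sum_filter, Fintype.sum_prod_type]
  rw [show (∑ a : E, ∑ b : E, if h a = t b then
        (if a = e then Finsupp.single b (1:ℤ) - Finsupp.single e 1 else 0) else 0) =
      ∑ a : E, if a = e then
        (∑ b : E, if t b = h e then Finsupp.single b (1:ℤ) - Finsupp.single e 1 else 0) else 0
      from Finset.sum_congr rfl fun a _ => by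
        by_cases ha : a = e
        · subst ha; simp [eq_comm]
        · simp [ha]]
  simp

end Aux

/-- for a `k`-out-regular graph,
`σ(Δ_G(w*) − v*) = Σ_{e⁻ = w*, e ≠ e*} Δ_{𝓛G}(e) − k·e*`. -/
theorem sigma_psi_wstar_eq
    {V E : Type*} [Fintype E] [DecidableEq V] [DecidableEq E]
    (t h : E → V) (estar : E) (k : ℕ) (hk : 0 < k)
    (hreg : ∀ v : V, outdeg t v = k) :
    sigmaMap t (lap t h (Finsupp.single (t estar) 1) - Finsupp.single (h estar) 1) =
      (∑ e : E, if t e = t estar ∧ e ≠ estar then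
          lap (fun p : LineEdge t h => p.1.1) (fun p : LineEdge t h => p.1.2)
            (Finsupp.single e 1)
        else 0) - (k : ℤ) • Finsupp.single estar 1 := by
  have hL : sigmaMap t (lap t h (Finsupp.single (t estar) 1) - Finsupp.single (h estar) 1) =
      (∑ e : E, if t e = t estar then SS t (h e) - SS t (t estar) else 0) - SS t (h estar) := by
    rw [map_sub, sigma_single, lap_single, map_sum]
    congr 1
    refine Finset.sum_congr rfl fun e _ => ?_
    split
    · rw [map_sub, sigma_single, sigma_single]
    · exact map_zero _
  have hLine : ∀ e : E,
      lap (fun p : LineEdge t h => p.1.1) (fun p : LineEdge t h => p.1.2)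
        (Finsupp.single e 1) = SS t (h e) - (k:ℤ) • Finsupp.single e 1 := by
    intro e
    rw [lineLap_single]
    have h1 : (∑ f : E, if t f = h e then Finsupp.single f (1:ℤ) - Finsupp.single e 1 else 0) =
        (∑ f : E, if t f = h e then Finsupp.single f (1:ℤ) else 0)
        - ∑ f : E, if t f = h e then Finsupp.single e (1:ℤ) else 0 := by
      rw [← Finset.sum_sub_distrib]
      exact Finset.sum_congr rfl fun f _ => by split <;> simp
    rw [h1, sum_ite_const, hreg, Nat.cast_smul_eq_nsmul]
    rfl
  have hR : (∑ e : E, if t e = t estar ∧ e ≠ estar then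
        lap (fun p : LineEdge t h => p.1.1) (fun p : LineEdge t h => p.1.2)
          (Finsupp.single e 1) else 0)
      = (∑ e : E, if t e = t estar then SS t (h e) - (k:ℤ) • Finsupp.single e 1 else 0)
        - (SS t (h estar) - (k:ℤ) • Finsupp.single estar 1) := by
    have hpt : ∀ e : E, (if t e = t estar ∧ e ≠ estar then
          lap (fun p : LineEdge t h => p.1.1) (fun p : LineEdge t h => p.1.2)
            (Finsupp.single e 1) else 0)
        = (if t e = t estar then SS t (h e) - (k:ℤ) • Finsupp.single e 1 else 0)
          - (if e = estar then SS t (h estar) - (k:ℤ) • Finsupp.single estar 1 else 0) := by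
      intro e
      by_cases he : e = estar
      · subst he; simp [hLine]
      · by_cases ht : t e = t estar <;> simp [he, ht, hLine]
    rw [Finset.sum_congr rfl (fun e _ => hpt e), Finset.sum_sub_distrib]
    congr 1
    simp
  rw [hL, hR]
  have key : (∑ e : E, if t e = t estar then SS t (h e) - SS t (t estar) else 0)
      = ∑ e : E, if t e = t estar then SS t (h e) - (k:ℤ) • Finsupp.single e 1 else 0 := by
    have s1 : (∑ e : E, if t e = t estar then SS t (h e) - SS t (t estar) else 0)
        = (∑ e : E, if t e = t estar then SS t (h e) else 0)
          - ∑ e : E, if t e = t estar then SS t (t estar) else 0 := by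
      rw [← Finset.sum_sub_distrib]
      exact Finset.sum_congr rfl fun e _ => by split <;> simp
    have s2 : (∑ e : E, if t e = t estar then SS t (h e) - (k:ℤ) • Finsupp.single e 1 else 0)
        = (∑ e : E, if t e = t estar then SS t (h e) else 0)
          - ∑ e : E, if t e = t estar then (k:ℤ) • Finsupp.single e (1:ℤ) else 0 := by
      rw [← Finset.sum_sub_distrib]
      exact Finset.sum_congr rfl fun e _ => by split <;> simp
    rw [s1, s2]
    congr 1
    rw [sum_ite_const, hreg]
    have s3 : (∑ e : E, if t e = t estar then (k:ℤ) • Finsupp.single e (1:ℤ) else 0)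
        = (k:ℤ) • ∑ e : E, if t e = t estar then Finsupp.single e (1:ℤ) else 0 := by
      rw [Finset.smul_sum]
      exact Finset.sum_congr rfl fun e _ => by split <;> simp
    rw [s3, Nat.cast_smul_eq_nsmul]
    rfl
  rw [key]
  abel
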